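/- Tonelli for products of arbitrary measures: Let μ, ν be measures on σ-rings 𝔖, 𝔗 and μ⊗ν their product. If f ∈ M⁺(S×T, 𝔖⊗𝔗) is 𝔖^σ⊗𝔗^σ-measurable (equivalently, {x : f(x) ≠ 0} is (μ⊗ν)-σ-finite), then ∫ f d(μ⊗ν) = ∫ (∫ f(s,t) dν(t)) dμ(s) = ∫ (∫ f(s,t) dμ(s)) dν(t), and finiteness of any one of the three quantities implies f is (μ⊗ν)-integrable. -/

import Mathlib

/-!
Carathéodory extends `μ`, `ν` and `lam` to genuine measures on the σ-algebras generated by their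
σ-rings. If the support of `g` lies in some `E ∈ C`, every `genSA C`-measurable subset of `E`
belongs to `C`; hence the simple functions below `g` defining `lintSR C μ g` are the
`genSA C`-simple functions below `g`, and `lintSR C μ g` is the Lebesgue integral of `g` for any
measure agreeing with `μ` on the members of `C` inside `E`.

The support of `f` lies in a rectangle `A ×ˢ B` of σ-finite sets. Restricted to `A` and `B` the
extensions of `μ` and `ν` are σ-finite, and by uniqueness of measures on the π-system of rectangles
`lam` agrees with their product inside `A ×ˢ B`. Tonelli's theorem for σ-finite measures then gives
both iterated integrals, and the finiteness claim follows from the two equalities.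
-/

open Set ENNReal

/-- A family of sets is a σ-ring if it contains `∅` and is closed under
set differences and countable unions. -/
def IsSigmaRing {α : Type*} (C : Set (Set α)) : Prop :=
  ∅ ∈ C ∧ (∀ A B : Set α, A ∈ C → B ∈ C → A \ B ∈ C) ∧
    ∀ f : ℕ → Set α, (∀ n, f n ∈ C) → (⋃ n, f n) ∈ C

/-- The σ-ring generated by a family of sets. -/
def genSR {α : Type*} (D : Set (Set α)) : Set (Set α) :=
  ⋂₀ {C | IsSigmaRing C ∧ D ⊆ C}

/-- A measure on a σ-ring: countably additive, vanishing on `∅`. -/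
def IsMeasure {α : Type*} (C : Set (Set α)) (μ : Set α → ℝ≥0∞) : Prop :=
  μ ∅ = 0 ∧ ∀ f : ℕ → Set α, (∀ n, f n ∈ C) →
    Pairwise (Function.onFun Disjoint f) → μ (⋃ n, f n) = ∑' n, μ (f n)

/-- The family of μ-σ-finite sets: countable unions of sets of finite measure. -/
def sigmaFin {α : Type*} (C : Set (Set α)) (μ : Set α → ℝ≥0∞) : Set (Set α) :=
  {A | ∃ g : ℕ → Set α, (∀ n, g n ∈ C ∧ μ (g n) < ⊤) ∧ A = ⋃ n, g n}

/-- Restriction of a family of sets to a set `S`. -/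
def restrictFam {α : Type*} (D : Set (Set α)) (S : Set α) : Set (Set α) :=
  (fun A => A ∩ S) '' D

/-- The product σ-ring, generated by measurable rectangles. -/
def prodSR {α β : Type*} (S : Set (Set α)) (T : Set (Set β)) : Set (Set (α × β)) :=
  genSR {R | ∃ A ∈ S, ∃ B ∈ T, R = A ×ˢ B}

/-- The σ-algebra generated by a family of sets. -/
def genSA {α : Type*} (D : Set (Set α)) : MeasurableSpace α :=
  MeasurableSpace.generateFrom D

/-- The (extended) Lebesgue integral of a nonnegative function with respect to a
measure on a σ-ring, as the supremum of integrals of simple functions below it. -/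
noncomputable def lintSR {α : Type*} (C : Set (Set α)) (μ : Set α → ℝ≥0∞)
    (f : α → ℝ≥0∞) : ℝ≥0∞ :=
  ⨆ (n : ℕ) (c : Fin n → ℝ≥0∞) (A : Fin n → Set α) (_ : ∀ i, A i ∈ C)
    (_ : ∀ x, (∑ i, (A i).indicator (fun _ => c i) x) ≤ f x),
    ∑ i, c i * μ (A i)

/-- The positive part of an extended real, as an `ℝ≥0∞`. -/
noncomputable def epos (x : EReal) : ℝ≥0∞ := (x ⊔ 0).abs

/-- Measurability of an extended-real function with respect to a σ-ring:
measurable for the generated σ-algebra, with support in the σ-ring. -/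
def SRMeasurableE {α : Type*} (C : Set (Set α)) (f : α → EReal) : Prop :=
  @Measurable α EReal (genSA C) _ f ∧ {x | f x ≠ 0} ∈ C

/-- The Lebesgue integral of an extended-real function w.r.t. a measure on a σ-ring. -/
noncomputable def integralE {α : Type*} (C : Set (Set α)) (μ : Set α → ℝ≥0∞)
    (f : α → EReal) : EReal :=
  ((lintSR C μ fun x => epos (f x) : ℝ≥0∞) : EReal) -
    ((lintSR C μ fun x => epos (-f x) : ℝ≥0∞) : EReal)

/-- Integrability of an extended-real function w.r.t. a measure on a σ-ring. -/
def IntegrableE {α : Type*} (C : Set (Set α)) (μ : Set α → ℝ≥0∞)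
    (f : α → EReal) : Prop :=
  SRMeasurableE C f ∧ lintSR C μ (fun x => (f x).abs) < ⊤

/-- `lam` is the product of the measures `μ` and `ν` on σ-rings `S`, `T`:
the unique measure on the product σ-ring whose σ-finite component is the Halmos
product of the σ-finite components. -/
def IsProdMeasure {α β : Type*} (S : Set (Set α)) (T : Set (Set β))
    (μ : Set α → ℝ≥0∞) (ν : Set β → ℝ≥0∞) (lam : Set (α × β) → ℝ≥0∞) : Prop :=
  IsMeasure (prodSR S T) lam ∧
  (∀ A ∈ S, ∀ B ∈ T, μ A < ⊤ → ν B < ⊤ → lam (A ×ˢ B) = μ A * ν B) ∧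
  sigmaFin (prodSR S T) lam =
    genSR {R | ∃ A ∈ S, ∃ B ∈ T, μ A < ⊤ ∧ ν B < ⊤ ∧ R = A ×ˢ B}


open MeasureTheory

section

variable {α β : Type*}

def pairSeq (A B : Set α) : ℕ → Set α := fun n => if n = 0 then A else if n = 1 then B else ∅

lemma iUnion_pairSeq (A B : Set α) : ⋃ n, pairSeq A B n = A ∪ B := by
  ext x
  simp only [pairSeq, mem_iUnion, mem_union]
  constructor
  · rintro ⟨n, hn⟩
    split_ifs at hn <;> simp_all
  · rintro (h | h)
    exacts [⟨0, by simpa⟩, ⟨1, by simpa⟩]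

lemma pairwise_disjoint_pairSeq {A B : Set α} (h : Disjoint A B) :
    Pairwise (Function.onFun Disjoint (pairSeq A B)) := by
  intro i j hij
  simp only [Function.onFun, pairSeq]
  split_ifs <;> first | omega | simp | exact h | exact h.symm

namespace IsSigmaRing

variable {C : Set (Set α)}

lemma pairSeq_mem (hC : IsSigmaRing C) {A B : Set α} (hA : A ∈ C) (hB : B ∈ C) (n : ℕ) :
    pairSeq A B n ∈ C := by
  unfold pairSeq
  split_ifs
  exacts [hA, hB, hC.1]

lemma isSetRing (hC : IsSigmaRing C) : IsSetRing C where
  empty_mem := hC.1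
  union_mem _ _ hA hB := iUnion_pairSeq _ _ ▸ hC.2.2 _ (hC.pairSeq_mem hA hB)
  sdiff_mem := hC.2.1

lemma iUnion_mem (hC : IsSigmaRing C) {f : ℕ → Set α} (hf : ∀ n, f n ∈ C) : (⋃ n, f n) ∈ C :=
  hC.2.2 f hf

lemma inter_mem_of_measurableSet (hC : IsSigmaRing C) {A B : Set α}
    (hB : MeasurableSet[genSA C] B) (hA : A ∈ C) : B ∩ A ∈ C := by
  induction hB with
  | basic u hu => exact hC.isSetRing.inter_mem hu hA
  | empty => simpa using hC.1
  | compl u _ ih =>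
    rw [show uᶜ ∩ A = A \ (u ∩ A) by ext; simp [and_comm]]
    exact hC.2.1 _ _ hA ih
  | iUnion f _ ih => simpa [iUnion_inter] using hC.iUnion_mem ih

end IsSigmaRing

lemma sigmaFin_subset {C : Set (Set α)} {μ : Set α → ℝ≥0∞} (hC : IsSigmaRing C) :
    sigmaFin C μ ⊆ C := by
  rintro _ ⟨g, hg, rfl⟩
  exact hC.iUnion_mem fun n => (hg n).1

namespace IsMeasure

variable {C : Set (Set α)} {μ : Set α → ℝ≥0∞}

lemma union (hC : IsSigmaRing C) (hμ : IsMeasure C μ) {A B : Set α} (hA : A ∈ C) (hB : B ∈ C)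
    (hAB : Disjoint A B) : μ (A ∪ B) = μ A + μ B := by
  rw [← iUnion_pairSeq, hμ.2 _ (hC.pairSeq_mem hA hB) (pairwise_disjoint_pairSeq hAB),
    tsum_eq_sum (s := Finset.range 2)]
  · simp [pairSeq, Finset.sum_range_succ]
  · intro n hn
    simp only [Finset.mem_range, not_lt] at hn
    simp [pairSeq, show n ≠ 0 by omega, show n ≠ 1 by omega, hμ.1]

noncomputable def addContent (hC : IsSigmaRing C) (hμ : IsMeasure C μ) : AddContent ℝ≥0∞ C :=
  hC.isSetRing.addContent_of_union μ hμ.1 fun hA hB hAB => hμ.union hC hA hB hAB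

lemma isSigmaSubadditive_addContent (hC : IsSigmaRing C) (hμ : IsMeasure C μ) :
    (hμ.addContent hC).IsSigmaSubadditive :=
  isSigmaSubadditive_of_addContent_iUnion_eq_tsum hC.isSetRing fun f hf _ hd => hμ.2 f hf hd

noncomputable def toMeasure (hC : IsSigmaRing C) (hμ : IsMeasure C μ) : @Measure α (genSA C) :=
  (hμ.addContent hC).measure (mα := genSA C) hC.isSetRing.isSetSemiring le_rfl
    (hμ.isSigmaSubadditive_addContent hC)

lemma toMeasure_apply (hC : IsSigmaRing C) (hμ : IsMeasure C μ) {A : Set α} (hA : A ∈ C) :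
    hμ.toMeasure hC A = μ A :=
  AddContent.measure_eq (mα := genSA C) _ _ rfl _ hA

lemma mono (hC : IsSigmaRing C) (hμ : IsMeasure C μ) {A B : Set α} (hA : A ∈ C) (hB : B ∈ C)
    (hAB : A ⊆ B) : μ A ≤ μ B := by
  rw [← hμ.toMeasure_apply hC hA, ← hμ.toMeasure_apply hC hB]
  exact measure_mono hAB

lemma toMeasure_restrict_apply (hC : IsSigmaRing C) (hμ : IsMeasure C μ) {A A' : Set α}
    (hA' : A' ∈ C) (hA'A : A' ⊆ A) : (hμ.toMeasure hC).restrict A A' = μ A' := by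
  rw [Measure.restrict_eq_self _ hA'A, hμ.toMeasure_apply hC hA']

lemma sigmaFinite_toMeasure_restrict (hC : IsSigmaRing C) (hμ : IsMeasure C μ) {A : Set α}
    (hA : A ∈ sigmaFin C μ) : SigmaFinite ((hμ.toMeasure hC).restrict A) := by
  have hAm : MeasurableSet[genSA C] A := .basic _ (sigmaFin_subset hC hA)
  obtain ⟨a, ha, rfl⟩ := hA
  refine Measure.sigmaFinite_of_countable (S := insert (⋃ n, a n)ᶜ (range a))
    ((countable_range a).insert _) ?_ ?_
  · rintro _ (rfl | ⟨n, rfl⟩)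
    · rw [Measure.restrict_apply' hAm, compl_inter_self, measure_empty]
      exact zero_lt_top
    · rw [hμ.toMeasure_restrict_apply hC (ha n).1 (subset_iUnion a n)]
      exact (ha n).2
  · rw [sUnion_insert, sUnion_range, compl_union_self]

end IsMeasure

lemma isSigmaRing_sigmaFin {C : Set (Set α)} {μ : Set α → ℝ≥0∞} (hC : IsSigmaRing C)
    (hμ : IsMeasure C μ) : IsSigmaRing (sigmaFin C μ) := by
  refine ⟨⟨fun _ => ∅, fun _ => ⟨hC.1, by simp [hμ.1]⟩, by simp⟩, ?_, ?_⟩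
  · rintro _ B ⟨g, hg, rfl⟩ hB
    have hBC := sigmaFin_subset hC hB
    refine ⟨fun n => g n \ B, fun n => ⟨hC.2.1 _ _ (hg n).1 hBC, ?_⟩, iUnion_sdiff B g⟩
    exact (hμ.mono hC (hC.2.1 _ _ (hg n).1 hBC) (hg n).1 sdiff_subset).trans_lt (hg n).2
  · intro f hf
    choose g hg hfg using hf
    refine ⟨fun n => g n.unpair.1 n.unpair.2, fun n => hg _ _, ?_⟩
    rw [iUnion_unpair]
    exact iUnion_congr hfg

section genSR

variable {D : Set (Set α)}

lemma isSigmaRing_genSR (D : Set (Set α)) : IsSigmaRing (genSR D) :=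
  ⟨fun _ hC => hC.1.1, fun _ _ hA hB C hC => hC.1.2.1 _ _ (hA C hC) (hB C hC),
    fun _ hf C hC => hC.1.2.2 _ fun n => hf n C hC⟩

lemma subset_genSR (D : Set (Set α)) : D ⊆ genSR D := fun _ hA _ hC => hC.2 hA

lemma genSR_subset {C : Set (Set α)} (hC : IsSigmaRing C) (hDC : D ⊆ C) : genSR D ⊆ C :=
  fun _ hA => hA C ⟨hC, hDC⟩

lemma genSR_mono {D' : Set (Set α)} (h : D ⊆ D') : genSR D ⊆ genSR D' :=
  genSR_subset (isSigmaRing_genSR D') (h.trans (subset_genSR D'))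

lemma isSigmaRing_measurableSet (m : MeasurableSpace α) :
    IsSigmaRing {A : Set α | MeasurableSet[m] A} :=
  ⟨.empty, fun _ _ hA hB => hA.diff hB, fun _ hf => .iUnion hf⟩

lemma measurableSet_genSA_of_mem_genSR {A : Set α} (hA : A ∈ genSR D) :
    MeasurableSet[genSA D] A :=
  genSR_subset (isSigmaRing_measurableSet (genSA D))
    (fun _ => MeasurableSpace.measurableSet_generateFrom) hA

lemma genSA_genSR (D : Set (Set α)) : genSA (genSR D) = genSA D :=
  le_antisymm (MeasurableSpace.generateFrom_le fun _ => measurableSet_genSA_of_mem_genSR)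
    (MeasurableSpace.generateFrom_mono (subset_genSR D))

end genSR

section prodSR

variable {S : Set (Set α)} {T : Set (Set β)}

lemma prodSR_eq_genSR_image2 (S : Set (Set α)) (T : Set (Set β)) :
    prodSR S T = genSR (image2 (· ×ˢ ·) S T) := by
  unfold prodSR
  congr 1
  ext R
  simp [eq_comm]

lemma prodSR_mono {S' : Set (Set α)} {T' : Set (Set β)} (hS : S' ⊆ S) (hT : T' ⊆ T) :
    prodSR S' T' ⊆ prodSR S T := by
  simp only [prodSR_eq_genSR_image2]
  exact genSR_mono (image2_subset hS hT)

lemma prod_mem_prodSR {A : Set α} {B : Set β} (hA : A ∈ S) (hB : B ∈ T) : A ×ˢ B ∈ prodSR S T :=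
  prodSR_eq_genSR_image2 S T ▸ subset_genSR _ (mem_image2_of_mem hA hB)

lemma exists_subset_prod_of_mem_prodSR (hS : IsSigmaRing S) (hT : IsSigmaRing T)
    {E : Set (α × β)} (hE : E ∈ prodSR S T) : ∃ A ∈ S, ∃ B ∈ T, E ⊆ A ×ˢ B := by
  refine genSR_subset (C := {E | ∃ A ∈ S, ∃ B ∈ T, E ⊆ A ×ˢ B}) ⟨?_, ?_, ?_⟩ ?_ hE
  · exact ⟨∅, hS.1, ∅, hT.1, empty_subset _⟩
  · rintro E F ⟨A, hA, B, hB, hE⟩ -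
    exact ⟨A, hA, B, hB, sdiff_subset.trans hE⟩
  · intro f hf
    choose A hA B hB hf using hf
    refine ⟨⋃ n, A n, hS.iUnion_mem hA, ⋃ n, B n, hT.iUnion_mem hB, iUnion_subset fun n => ?_⟩
    exact (hf n).trans (prod_mono (subset_iUnion A n) (subset_iUnion B n))
  · rintro _ ⟨A, hA, B, hB, rfl⟩
    exact ⟨A, hA, B, hB, subset_rfl⟩

lemma genSA_prodSR_le [mα : MeasurableSpace α] [mβ : MeasurableSpace β] (hSα : genSA S ≤ mα)
    (hTβ : genSA T ≤ mβ) : genSA (prodSR S T) ≤ Prod.instMeasurableSpace := by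
  rw [prodSR_eq_genSR_image2, genSA_genSR]
  refine MeasurableSpace.generateFrom_le ?_
  rintro _ ⟨A, hA, B, hB, rfl⟩
  exact (hSα _ (.basic _ hA)).prod (hTβ _ (.basic _ hB))

end prodSR

section lintSR

variable {C : Set (Set α)} {μ : Set α → ℝ≥0∞}

lemma le_lintSR {ι : Type*} [Fintype ι] {f : α → ℝ≥0∞} {c : ι → ℝ≥0∞} {A : ι → Set α}
    (hA : ∀ i, A i ∈ C) (hf : ∀ x, ∑ i, (A i).indicator (fun _ => c i) x ≤ f x) :
    ∑ i, c i * μ (A i) ≤ lintSR C μ f := by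
  let e := Fintype.equivFin ι
  have hsum (u : ι → ℝ≥0∞) : ∑ i, u i = ∑ k, u (e.symm k) := (e.symm.sum_comp u).symm
  rw [hsum]
  exact le_iSup_of_le _ <| le_iSup_of_le (c ∘ e.symm) <| le_iSup_of_le (A ∘ e.symm) <|
    le_iSup_of_le (fun k => hA _) <| le_iSup_of_le (fun x => (hsum _).symm.trans_le (hf x)) le_rfl

lemma lintSR_le_lintegral [m : MeasurableSpace α] (hCm : genSA C ≤ m) {Q : Measure α}
    {E : Set α} (hQ : ∀ A ∈ C, A ⊆ E → Q A = μ A) {g : α → ℝ≥0∞}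
    (hgE : Function.support g ⊆ E) : lintSR C μ g ≤ ∫⁻ x, g x ∂Q := by
  refine iSup_le fun n => iSup_le fun c => iSup_le fun A => iSup_le fun hA => iSup_le fun hle => ?_
  have hAm (i : Fin n) : MeasurableSet (A i) := hCm _ (.basic _ (hA i))
  have hμQ (i : Fin n) : c i * μ (A i) = c i * Q (A i) := by
    rcases eq_or_ne (c i) 0 with hc | hc
    · simp [hc]
    · refine congrArg _ (hQ _ (hA i) fun x hx => hgE ?_).symm
      have hcx : c i ≤ ∑ j, (A j).indicator (fun _ => c j) x := by
        simpa [hx] using Finset.single_le_sum (f := fun j => (A j).indicator (fun _ => c j) x)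
          (fun j _ => zero_le) (Finset.mem_univ i)
      exact ne_bot_of_le_ne_bot hc (hcx.trans (hle x))
  calc ∑ i, c i * μ (A i) = ∑ i, ∫⁻ x, (A i).indicator (fun _ => c i) x ∂Q := by
        simp_rw [hμQ, lintegral_indicator_const (hAm _)]
    _ = ∫⁻ x, ∑ i, (A i).indicator (fun _ => c i) x ∂Q :=
        (lintegral_finsetSum _ fun i _ => measurable_const.indicator (hAm i)).symm
    _ ≤ ∫⁻ x, g x ∂Q := lintegral_mono hle

lemma lintegral_le_lintSR (hC : IsSigmaRing C) {Q : @Measure α (genSA C)} {E : Set α}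
    (hE : E ∈ C) (hQ : ∀ A ∈ C, A ⊆ E → Q A = μ A) {g : α → ℝ≥0∞}
    (hgE : Function.support g ⊆ E) : ∫⁻ x, g x ∂Q ≤ lintSR C μ g := by
  let _ : MeasurableSpace α := genSA C
  rw [lintegral_def]
  refine iSup₂_le fun φ hφ => ?_
  have hEm : MeasurableSet E := .basic _ hE
  -- `φ ≤ g` vanishes off `E`, and the traces on `E` of its fibres lie in `C`.
  have hφE : φ.restrict E = φ := by
    ext x
    rw [SimpleFunc.restrict_apply _ hEm, indicator_apply_eq_self]
    exact fun hx => le_antisymm ((hφ x).trans_eq (Function.notMem_support.1 (hx <| hgE ·))) zero_le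
  have hfiber (c : ℝ≥0∞) : φ ⁻¹' {c} ∩ E ∈ C :=
    hC.inter_mem_of_measurableSet (φ.measurableSet_fiber c) hE
  rw [← hφE, SimpleFunc.restrict_lintegral _ hEm, ← Finset.sum_coe_sort]
  simp_rw [hQ _ (hfiber _) inter_subset_right]
  refine le_lintSR (fun c => hfiber c) fun x => ?_
  rw [Finset.sum_eq_single ⟨φ x, φ.mem_range_self x⟩]
  · exact (indicator_le_self' (fun _ _ => zero_le) x).trans (hφ x)
  · rintro c - hc
    exact indicator_of_notMem (fun h => hc (Subtype.ext h.1.symm)) _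
  · simp

theorem lintSR_eq_lintegral [m : MeasurableSpace α] (hC : IsSigmaRing C) (hCm : genSA C ≤ m)
    {Q : Measure α} {E : Set α} (hE : E ∈ C) (hQ : ∀ A ∈ C, A ⊆ E → Q A = μ A)
    {g : α → ℝ≥0∞} (hg : Measurable[genSA C] g) (hgE : Function.support g ⊆ E) :
    lintSR C μ g = ∫⁻ x, g x ∂Q := by
  refine le_antisymm (lintSR_le_lintegral hCm hQ hgE) ?_
  rw [← lintegral_trim hCm hg]
  refine lintegral_le_lintSR hC hE (fun A hA hAE => ?_) hgE
  rw [trim_measurableSet_eq hCm (.basic _ hA), hQ A hA hAE]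

end lintSR

section prodMeasure

variable {S : Set (Set α)} {T : Set (Set β)} {μ : Set α → ℝ≥0∞} {ν : Set β → ℝ≥0∞}
  {lam : Set (α × β) → ℝ≥0∞}

lemma isSigmaRing_prodSR (S : Set (Set α)) (T : Set (Set β)) : IsSigmaRing (prodSR S T) :=
  isSigmaRing_genSR _

theorem IsProdMeasure.apply_eq_prod_apply (hS : IsSigmaRing S) (hT : IsSigmaRing T)
    (hlam : IsProdMeasure S T μ ν lam) [mα : MeasurableSpace α] [mβ : MeasurableSpace β]
    (hSα : genSA S ≤ mα) (hTβ : genSA T ≤ mβ) {Qa : Measure α} {Qb : Measure β} [SFinite Qb]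
    {A : Set α} {B : Set β} (hA : A ∈ sigmaFin S μ) (hB : B ∈ sigmaFin T ν)
    (hQa : ∀ A' ∈ S, A' ⊆ A → Qa A' = μ A') (hQb : ∀ B' ∈ T, B' ⊆ B → Qb B' = ν B')
    {E : Set (α × β)} (hE : E ∈ prodSR S T) (hEAB : E ⊆ A ×ˢ B) :
    lam E = Qa.prod Qb E := by
  obtain ⟨a, ha, rfl⟩ := hA
  obtain ⟨b, hb, rfl⟩ := hB
  have hle := genSA_prodSR_le hSα hTβ
  set Λ := hlam.1.toMeasure (isSigmaRing_prodSR S T)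
  set P := (Qa.prod Qb).trim hle
  set W := (⋃ n, a n) ×ˢ (⋃ n, b n)
  have hW : MeasurableSet[genSA (prodSR S T)] W :=
    .basic _ (prod_mem_prodSR (hS.iUnion_mem fun n => (ha n).1) (hT.iUnion_mem fun n => (hb n).1))
  have hrect (i j : ℕ) {A' : Set α} {B' : Set β} (hA' : A' ∈ S) (hB' : B' ∈ T) (hAi : A' ⊆ a i)
      (hBj : B' ⊆ b j) : Λ.restrict W (A' ×ˢ B') = P.restrict W (A' ×ˢ B') := by
    have hAB' := prod_mem_prodSR hA' hB'
    have hQa' := hQa A' hA' (hAi.trans (subset_iUnion a i))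
    have hQb' := hQb B' hB' (hBj.trans (subset_iUnion b j))
    have hμA' : μ A' < ⊤ := by
      rw [← hQa']
      exact (measure_mono hAi).trans_lt (hQa _ (ha i).1 (subset_iUnion a i) ▸ (ha i).2)
    have hνB' : ν B' < ⊤ := by
      rw [← hQb']
      exact (measure_mono hBj).trans_lt (hQb _ (hb j).1 (subset_iUnion b j) ▸ (hb j).2)
    have hsub : A' ×ˢ B' ⊆ W := prod_mono (hAi.trans (subset_iUnion a i))
      (hBj.trans (subset_iUnion b j))
    rw [Measure.restrict_eq_self _ hsub, Measure.restrict_eq_self _ hsub,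
      hlam.1.toMeasure_apply _ hAB',
      trim_measurableSet_eq hle (.basic _ hAB'), hlam.2.1 A' hA' B' hB' hμA' hνB',
      Measure.prod_prod, hQa', hQb']
  have hnull (R : @Measure (α × β) (genSA (prodSR S T))) {X : Set (α × β)} (hX : X ⊆ Wᶜ) :
      R.restrict W X = 0 := by
    rw [Measure.restrict_apply' hW, (subset_compl_iff_disjoint_right.1 hX).inter_eq, measure_empty]
  -- Uniqueness on the π-system of rectangles, for the cover of the whole space by the
  -- finite rectangles `a i ×ˢ b j` and by `Wᶜ`, which both restricted measures ignore.
  have hΛP : Λ.restrict W = P.restrict W := by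
    refine Measure.ext_of_generateFrom_of_cover (S := image2 (· ×ˢ ·) S T)
      (T := insert Wᶜ (range fun p : ℕ × ℕ => a p.1 ×ˢ b p.2)) ?_
      ((countable_range _).insert _)
      (hS.isSetRing.isSetSemiring.isPiSystem.prod hT.isSetRing.isSetSemiring.isPiSystem) ?_ ?_ ?_ ?_
    · exact (congrArg genSA (prodSR_eq_genSR_image2 S T)).trans (genSA_genSR _)
    · rw [sUnion_insert, sUnion_range, iUnion_prod, compl_union_self]
    · rintro _ (rfl | ⟨⟨i, j⟩, rfl⟩)
      · exact (hnull Λ subset_rfl).trans_ne zero_ne_top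
      · have hab := prod_mem_prodSR (ha i).1 (hb j).1
        rw [Measure.restrict_apply' hW]
        refine ((measure_mono inter_subset_left).trans_lt ?_).ne
        rw [hlam.1.toMeasure_apply _ hab, hlam.2.1 _ (ha i).1 _ (hb j).1 (ha i).2 (hb j).2]
        exact ENNReal.mul_lt_top (ha i).2 (hb j).2
    · rintro _ (rfl | ⟨⟨i, j⟩, rfl⟩) _ ⟨A', hA', B', hB', rfl⟩
      · rw [hnull Λ inter_subset_right, hnull P inter_subset_right]
      · rw [prod_inter_prod]
        exact hrect i j (hS.isSetRing.inter_mem hA' (ha i).1) (hT.isSetRing.inter_mem hB' (hb j).1)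
          inter_subset_right inter_subset_right
    · rintro _ (rfl | ⟨⟨i, j⟩, rfl⟩)
      · rw [hnull Λ subset_rfl, hnull P subset_rfl]
      · exact hrect i j (ha i).1 (hb j).1 subset_rfl subset_rfl
  rw [← hlam.1.toMeasure_apply (isSigmaRing_prodSR S T) hE,
    ← trim_measurableSet_eq hle (.basic _ hE), ← Measure.restrict_eq_self Λ hEAB,
    ← Measure.restrict_eq_self P hEAB, hΛP]

end prodMeasure

section iterated

variable {S : Set (Set α)} {T : Set (Set β)} {μ : Set α → ℝ≥0∞} {ν : Set β → ℝ≥0∞}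

theorem IsProdMeasure.lintSR_eq_lintegral_prod (hS : IsSigmaRing S) (hT : IsSigmaRing T)
    {lam : Set (α × β) → ℝ≥0∞} (hlam : IsProdMeasure S T μ ν lam) [mα : MeasurableSpace α]
    [mβ : MeasurableSpace β] (hSα : genSA S ≤ mα) (hTβ : genSA T ≤ mβ) {Qa : Measure α}
    {Qb : Measure β} [SFinite Qb] {A : Set α} {B : Set β} (hA : A ∈ sigmaFin S μ)
    (hB : B ∈ sigmaFin T ν) (hQa : ∀ A' ∈ S, A' ⊆ A → Qa A' = μ A')
    (hQb : ∀ B' ∈ T, B' ⊆ B → Qb B' = ν B') {f : α × β → ℝ≥0∞}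
    (hf : Measurable[genSA (prodSR S T)] f) (hfAB : Function.support f ⊆ A ×ˢ B) :
    lintSR (prodSR S T) lam f = ∫⁻ z, f z ∂Qa.prod Qb :=
  lintSR_eq_lintegral (isSigmaRing_prodSR S T) (genSA_prodSR_le hSα hTβ)
    (prod_mem_prodSR (sigmaFin_subset hS hA) (sigmaFin_subset hT hB))
    (fun _ hE hEAB => (hlam.apply_eq_prod_apply hS hT hSα hTβ hA hB hQa hQb hE hEAB).symm) hf hfAB

theorem lintSR_lintSR_eq_lintegral_lintegral [mα : MeasurableSpace α] [mβ : MeasurableSpace β]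
    (hα : mα = genSA S) (hβ : mβ = genSA T) (hS : IsSigmaRing S) (hT : IsSigmaRing T)
    {Qa : Measure α} {Qb : Measure β} [SFinite Qb] {A : Set α} {B : Set β} (hA : A ∈ S)
    (hB : B ∈ T) (hQa : ∀ A' ∈ S, A' ⊆ A → Qa A' = μ A') (hQb : ∀ B' ∈ T, B' ⊆ B → Qb B' = ν B')
    {f : α × β → ℝ≥0∞} (hf : Measurable f) (hfAB : Function.support f ⊆ A ×ˢ B) :
    lintSR S μ (fun s => lintSR T ν (fun t => f (s, t))) = ∫⁻ s, ∫⁻ t, f (s, t) ∂Qb ∂Qa := by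
  have hsection (s : α) : lintSR T ν (fun t => f (s, t)) = ∫⁻ t, f (s, t) ∂Qb :=
    lintSR_eq_lintegral hT hβ.ge hB hQb ((hf.comp measurable_prodMk_left).mono hβ.le le_rfl)
      fun _ ht => (hfAB ht).2
  simp_rw [hsection]
  refine lintSR_eq_lintegral hS hα.ge hA hQa (hf.lintegral_prod_right'.mono hα.le le_rfl)
    fun s hs => ?_
  by_contra hsA
  have hzero (t : β) : f (s, t) = 0 := by_contra fun h => hsA (hfAB h).1
  exact hs (by simp [hzero])

end iterated

end

/-- Tonelli: for a nonnegative `𝔖^σ ⊗ 𝔗^σ`-measurable function,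
the integral with respect to the product measure equals both iterated integrals,
and finiteness of any of the three implies integrability. -/
theorem stmt_18 {α β : Type*} (S : Set (Set α)) (T : Set (Set β))
    (μ : Set α → ℝ≥0∞) (ν : Set β → ℝ≥0∞)
    (hS : IsSigmaRing S) (hT : IsSigmaRing T)
    (hμ : IsMeasure S μ) (hν : IsMeasure T ν)
    (lam : Set (α × β) → ℝ≥0∞) (hlam : IsProdMeasure S T μ ν lam)
    (f : α × β → ℝ≥0∞)
    (hfm : @Measurable (α × β) ℝ≥0∞ (genSA (prodSR (sigmaFin S μ) (sigmaFin T ν))) _ f)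
    (hfs : {x | f x ≠ 0} ∈ prodSR (sigmaFin S μ) (sigmaFin T ν)) :
    lintSR (prodSR S T) lam f =
      lintSR S μ (fun s => lintSR T ν (fun t => f (s, t))) ∧
    lintSR (prodSR S T) lam f =
      lintSR T ν (fun t => lintSR S μ (fun s => f (s, t))) ∧
    ((lintSR (prodSR S T) lam f < ⊤ ∨
        lintSR S μ (fun s => lintSR T ν (fun t => f (s, t))) < ⊤ ∨
        lintSR T ν (fun t => lintSR S μ (fun s => f (s, t))) < ⊤) →
      lintSR (prodSR S T) lam f < ⊤) := by
  let _ : MeasurableSpace α := genSA S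
  let _ : MeasurableSpace β := genSA T
  obtain ⟨A, hA, B, hB, hfAB⟩ :=
    exists_subset_prod_of_mem_prodSR (isSigmaRing_sigmaFin hS hμ) (isSigmaRing_sigmaFin hT hν)
      hfs
  have := hμ.sigmaFinite_toMeasure_restrict hS hA
  have := hν.sigmaFinite_toMeasure_restrict hT hB
  have hQa (A' : Set α) := hμ.toMeasure_restrict_apply hS (A := A) (A' := A')
  have hQb (B' : Set β) := hν.toMeasure_restrict_apply hT (A := B) (A' := B')
  have hf : Measurable[genSA (prodSR S T)] f := hfm.mono
    (MeasurableSpace.generateFrom_mono (prodSR_mono (sigmaFin_subset hS) (sigmaFin_subset hT)))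
    le_rfl
  have hfP : Measurable f := hf.mono (genSA_prodSR_le le_rfl le_rfl) le_rfl
  have hprod := hlam.lintSR_eq_lintegral_prod hS hT le_rfl le_rfl hA hB hQa hQb hf hfAB
  have hST := lintSR_lintSR_eq_lintegral_lintegral rfl rfl hS hT (sigmaFin_subset hS hA)
    (sigmaFin_subset hT hB) hQa hQb hfP hfAB
  have hTS := lintSR_lintSR_eq_lintegral_lintegral rfl rfl hT hS (sigmaFin_subset hT hB)
    (sigmaFin_subset hS hA) hQb hQa (hfP.comp measurable_swap)
    fun _ hz => ⟨(hfAB hz).2, (hfAB hz).1⟩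
  have h1 : lintSR (prodSR S T) lam f = lintSR S μ (fun s => lintSR T ν (fun t => f (s, t))) :=
    hprod.trans ((lintegral_prod _ hfP.aemeasurable).trans hST.symm)
  have h2 : lintSR (prodSR S T) lam f = lintSR T ν (fun t => lintSR S μ (fun s => f (s, t))) :=
    hprod.trans ((lintegral_prod_symm _ hfP.aemeasurable).trans hTS.symm)
  exact ⟨h1, h2, by simp only [← h1, ← h2, or_self, imp_self]⟩
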